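/- arXiv:1009.3665 — 3 statements merged into one kernel-verified Lean document; each statement's English description precedes it below -/
import Mathlib

section
/- For any finite bipartite graph with nonnegative vertex weights, the minimum weight of a vertex cover equals the maximum value of a fractional matching (equivalently, the max-flow in the associated source–sink network where the source connects to one side with capacities equal to the vertex weights, the sink connects to the other side with capacities equal to the vertex weights, and original edges have infinite capacity). -/
open Finset

namespace WKonig

variable {A B : Type*} [Fintype A] [Fintype B] [DecidableEq A] [DecidableEq B]

def Feas (E : A → B → Prop) (w : A ⊕ B → ℝ) : Set (A → B → ℝ) :=
  {f | (∀ a b, 0 ≤ f a b) ∧ (∀ a b, ¬ E a b → f a b = 0) ∧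
    (∀ a, ∑ b, f a b ≤ w (Sum.inl a)) ∧ (∀ b, ∑ a, f a b ≤ w (Sum.inr b))}

inductive Reach (E : A → B → Prop) (w : A ⊕ B → ℝ) (f : A → B → ℝ) : A ⊕ B → Prop
  | base (a : A) : (∑ b, f a b) < w (Sum.inl a) → Reach E w f (Sum.inl a)
  | fwd (a : A) (b : B) : Reach E w f (Sum.inl a) → E a b → Reach E w f (Sum.inr b)
  | bwd (a : A) (b : B) : Reach E w f (Sum.inr b) → 0 < f a b → Reach E w f (Sum.inl a)

def ChiProp (E : A → B → Prop) (w : A ⊕ B → ℝ) (f : A → B → ℝ) : A ⊕ B → Prop :=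
  Sum.elim
    (fun a => ∃ χ : A → B → ℝ, (∀ a' b', ¬ E a' b' → χ a' b' = 0) ∧
      (∀ a' b', f a' b' = 0 → 0 ≤ χ a' b') ∧
      (∀ b', ∑ a', χ a' b' = 0) ∧
      (∀ a', (∑ b', χ a' b') + (if a' = a then 1 else 0) ≤ 0 ∨ ∑ b', f a' b' < w (Sum.inl a')))
    (fun b => ∃ χ : A → B → ℝ, (∀ a' b', ¬ E a' b' → χ a' b' = 0) ∧
      (∀ a' b', f a' b' = 0 → 0 ≤ χ a' b') ∧
      (∀ b', ∑ a', χ a' b' = if b' = b then 1 else 0) ∧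
      (∀ a', (∑ b', χ a' b') ≤ 0 ∨ ∑ b', f a' b' < w (Sum.inl a')))

lemma reach_chi {E : A → B → Prop} {w : A ⊕ B → ℝ} {f : A → B → ℝ}
    (hf : f ∈ Feas E w) {v : A ⊕ B} (hv : Reach E w f v) : ChiProp E w f v := by
  induction hv with
  | base a ha =>
    refine ⟨0, by simp, by simp, by simp, fun a' => ?_⟩
    by_cases h : a' = a
    · subst h; exact Or.inr ha
    · simp [h]
  | fwd a b hr hE ih =>
    obtain ⟨χ, h1, h2, h3, h4⟩ := ih
    refine ⟨fun a' b' => χ a' b' + (if a' = a then 1 else 0) * (if b' = b then 1 else 0),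
      ?_, ?_, ?_, ?_⟩
    · intro a' b' hne
      rcases Classical.em (a' = a ∧ b' = b) with ⟨rfl, rfl⟩ | h
      · exact absurd hE hne
      · have : (if a' = a then (1:ℝ) else 0) * (if b' = b then 1 else 0) = 0 := by
          by_cases ha' : a' = a <;> by_cases hb' : b' = b <;> simp_all
        dsimp only; rw [h1 a' b' hne, this, zero_add]
    · intro a' b' hz
      have := h2 a' b' hz
      positivity
    · intro b'
      rw [Finset.sum_add_distrib, h3 b', zero_add, ← Finset.sum_mul]
      simp [Finset.sum_ite_eq']
    · intro a'
      rcases h4 a' with h | h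
      · left
        rw [Finset.sum_add_distrib, ← Finset.mul_sum]
        simp only [Finset.sum_ite_eq']
        by_cases ha' : a' = a <;> simp_all
      · exact Or.inr h
  | bwd a b hr hpos ih =>
    obtain ⟨χ, h1, h2, h3, h4⟩ := ih
    refine ⟨fun a' b' => χ a' b' - (if a' = a then 1 else 0) * (if b' = b then 1 else 0),
      ?_, ?_, ?_, ?_⟩
    · intro a' b' hne
      have hz : f a' b' = 0 := hf.2.1 a' b' hne
      rcases Classical.em (a' = a ∧ b' = b) with ⟨rfl, rfl⟩ | h
      · exact absurd hz (ne_of_gt hpos)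
      · have : (if a' = a then (1:ℝ) else 0) * (if b' = b then 1 else 0) = 0 := by
          by_cases ha' : a' = a <;> by_cases hb' : b' = b <;> simp_all
        dsimp only; rw [h1 a' b' hne, this, sub_zero]
    · intro a' b' hz
      rcases Classical.em (a' = a ∧ b' = b) with ⟨rfl, rfl⟩ | h
      · exact absurd hz (ne_of_gt hpos)
      · have : (if a' = a then (1:ℝ) else 0) * (if b' = b then 1 else 0) = 0 := by
          by_cases ha' : a' = a <;> by_cases hb' : b' = b <;> simp_all
        dsimp only; rw [this, sub_zero]; exact h2 a' b' hz
    · intro b'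
      rw [Finset.sum_sub_distrib, h3 b', ← Finset.sum_mul]
      simp only [Finset.sum_ite_eq']
      by_cases hb' : b' = b <;> simp [hb']
    · intro a'
      rcases h4 a' with h | h
      · left
        rw [Finset.sum_sub_distrib, ← Finset.mul_sum]
        simp only [Finset.sum_ite_eq', Finset.mem_univ, if_true]
        by_cases ha' : a' = a
        · subst ha'; simp only [if_pos rfl, mul_one]; linarith
        · simp only [if_neg ha', zero_mul, sub_zero]; linarith
      · exact Or.inr h

lemma reach_saturated {E : A → B → Prop} {w : A ⊕ B → ℝ} {f : A → B → ℝ}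
    (hf : f ∈ Feas E w)
    (hmax : ∀ g ∈ Feas E w, (∑ a, ∑ b, g a b) ≤ ∑ a, ∑ b, f a b)
    {b : B} (hb : Reach E w f (Sum.inr b)) : ∑ a, f a b = w (Sum.inr b) := by
  by_contra hne
  have hlt : ∑ a, f a b < w (Sum.inr b) := lt_of_le_of_ne (hf.2.2.2 b) hne
  obtain ⟨χ, hχE, hχ0, hχcol, hχrow⟩ := reach_chi hf hb
  set T : ℝ → A → B → ℝ := fun ε a' b' => f a' b' + ε * χ a' b' with hT
  have hrowT : ∀ (ε : ℝ) (a' : A), ∑ b', T ε a' b' = (∑ b', f a' b') + ε * ∑ b', χ a' b' := by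
    intro ε a'; simp [hT, Finset.sum_add_distrib, Finset.mul_sum]
  have hcolT : ∀ (ε : ℝ) (b' : B), ∑ a', T ε a' b' = (∑ a', f a' b') + ε * ∑ a', χ a' b' := by
    intro ε b'; simp [hT, Finset.sum_add_distrib, Finset.mul_sum]
  have hmem : ∀ᶠ ε in nhdsWithin 0 (Set.Ioi 0), (0:ℝ) < ε := by
    filter_upwards [self_mem_nhdsWithin] with ε hε using hε
  have hev1 : ∀ᶠ ε in nhdsWithin 0 (Set.Ioi 0), ∀ a' b', 0 ≤ T ε a' b' := by
    rw [Filter.eventually_all]; intro a'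
    rw [Filter.eventually_all]; intro b'
    by_cases hz : f a' b' = 0
    · filter_upwards [hmem] with ε hε
      have := hχ0 a' b' hz
      simp only [hT, hz, zero_add]
      positivity
    · have hpos : 0 < f a' b' := lt_of_le_of_ne (hf.1 a' b') (Ne.symm hz)
      have ht : Filter.Tendsto (fun ε : ℝ => T ε a' b') (nhds 0) (nhds (f a' b')) := by
        have : Filter.Tendsto (fun ε : ℝ => f a' b' + ε * χ a' b') (nhds 0)
            (nhds (f a' b' + 0 * χ a' b')) := by
          exact Filter.Tendsto.add tendsto_const_nhds
            (Filter.Tendsto.mul Filter.tendsto_id tendsto_const_nhds)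
        simpa using this
      have := ht.eventually (eventually_gt_nhds hpos)
      filter_upwards [this.filter_mono nhdsWithin_le_nhds] with ε hε using le_of_lt hε
  have hev2 : ∀ᶠ ε in nhdsWithin 0 (Set.Ioi 0), ∀ a', ∑ b', T ε a' b' ≤ w (Sum.inl a') := by
    rw [Filter.eventually_all]; intro a'
    rcases hχrow a' with h | h
    · filter_upwards [hmem] with ε hε
      rw [hrowT]
      nlinarith [hf.2.2.1 a']
    · have ht : Filter.Tendsto (fun ε : ℝ => ∑ b', T ε a' b') (nhds 0)
          (nhds (∑ b', f a' b')) := by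
        have : Filter.Tendsto (fun ε : ℝ => (∑ b', f a' b') + ε * ∑ b', χ a' b') (nhds 0)
            (nhds ((∑ b', f a' b') + 0 * ∑ b', χ a' b')) :=
          Filter.Tendsto.add tendsto_const_nhds
            (Filter.Tendsto.mul Filter.tendsto_id tendsto_const_nhds)
        simpa [hrowT] using this
      have := ht.eventually (eventually_lt_nhds h)
      filter_upwards [this.filter_mono nhdsWithin_le_nhds] with ε hε using le_of_lt hε
  have hev3 : ∀ᶠ ε in nhdsWithin 0 (Set.Ioi 0), ∀ b', ∑ a', T ε a' b' ≤ w (Sum.inr b') := by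
    rw [Filter.eventually_all]; intro b'
    by_cases hbb : b' = b
    · subst hbb
      have ht : Filter.Tendsto (fun ε : ℝ => ∑ a', T ε a' b') (nhds 0)
          (nhds (∑ a', f a' b')) := by
        have : Filter.Tendsto (fun ε : ℝ => (∑ a', f a' b') + ε * ∑ a', χ a' b') (nhds 0)
            (nhds ((∑ a', f a' b') + 0 * ∑ a', χ a' b')) :=
          Filter.Tendsto.add tendsto_const_nhds
            (Filter.Tendsto.mul Filter.tendsto_id tendsto_const_nhds)
        simpa [hcolT] using this
      have := ht.eventually (eventually_lt_nhds hlt)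
      filter_upwards [this.filter_mono nhdsWithin_le_nhds] with ε hε using le_of_lt hε
    · refine Filter.Eventually.of_forall fun ε => ?_
      rw [hcolT, hχcol b', if_neg hbb, mul_zero, add_zero]
      exact hf.2.2.2 b'
  have hev4 : ∀ (ε : ℝ), ∀ a' b', ¬ E a' b' → T ε a' b' = 0 := by
    intro ε a' b' hne'
    simp [hT, hf.2.1 a' b' hne', hχE a' b' hne']
  obtain ⟨ε, hfeas1, hfeas2, hfeas3, hεpos⟩ :=
    (hev1.and (hev2.and (hev3.and hmem))).exists
  have hgF : T ε ∈ Feas E w := ⟨hfeas1, hev4 ε, hfeas2, hfeas3⟩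
  have htot : ∑ a, ∑ b', T ε a b' = (∑ a, ∑ b', f a b') + ε := by
    have h1 : ∑ a, ∑ b', T ε a b' = ∑ b', ∑ a, T ε a b' := Finset.sum_comm
    have h2 : ∑ a, ∑ b', f a b' = ∑ b', ∑ a, f a b' := Finset.sum_comm
    rw [h1, h2]
    have : ∀ b', ∑ a, T ε a b' = (∑ a, f a b') + ε * (if b' = b then 1 else 0) := by
      intro b'; rw [hcolT, hχcol]
    rw [Finset.sum_congr rfl fun b' _ => this b', Finset.sum_add_distrib]
    congr 1
    rw [← Finset.mul_sum]
    simp [Finset.sum_ite_eq']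
  have := hmax (T ε) hgF
  rw [htot] at this
  linarith

lemma cut_exists {E : A → B → Prop} {w : A ⊕ B → ℝ} {f : A → B → ℝ}
    (hf : f ∈ Feas E w)
    (hmax : ∀ g ∈ Feas E w, (∑ a, ∑ b, g a b) ≤ ∑ a, ∑ b, f a b) :
    ∃ S : Finset (A ⊕ B), (∀ a b, E a b → Sum.inl a ∈ S ∨ Sum.inr b ∈ S) ∧
      (∑ v ∈ S, w v) = ∑ a, ∑ b, f a b := by
  classical
  set RA : Finset A := univ.filter (fun a => Reach E w f (Sum.inl a)) with hRA
  set RB : Finset B := univ.filter (fun b => Reach E w f (Sum.inr b)) with hRB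
  refine ⟨(RAᶜ.map ⟨Sum.inl, Sum.inl_injective⟩) ∪ (RB.map ⟨Sum.inr, Sum.inr_injective⟩),
    ?_, ?_⟩
  · intro a b hE
    by_cases h : Reach E w f (Sum.inl a)
    · right
      exact Finset.mem_union_right _ (Finset.mem_map.2 ⟨b,
        Finset.mem_filter.2 ⟨Finset.mem_univ _, Reach.fwd a b h hE⟩, rfl⟩)
    · left
      exact Finset.mem_union_left _ (Finset.mem_map.2 ⟨a,
        Finset.mem_compl.2 (by simp [hRA, h]), rfl⟩)
  · have hdisj : Disjoint (RAᶜ.map ⟨Sum.inl, Sum.inl_injective⟩)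
        (RB.map ⟨Sum.inr, Sum.inr_injective⟩) := by
      simp only [Finset.disjoint_left, Finset.mem_map]
      rintro v ⟨a, _, rfl⟩ ⟨b, _, h⟩
      exact Sum.inl_ne_inr h.symm
    rw [Finset.sum_union hdisj, Finset.sum_map, Finset.sum_map]
    simp only [Function.Embedding.coeFn_mk]
    -- a ∉ RA is saturated
    have hAsat : ∀ a ∈ RAᶜ, w (Sum.inl a) = ∑ b, f a b := by
      intro a ha
      have hnr : ¬ Reach E w f (Sum.inl a) := by
        simpa [hRA] using Finset.mem_compl.1 ha
      refine le_antisymm ?_ (hf.2.2.1 a)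
      by_contra h
      exact hnr (Reach.base a (lt_of_not_ge h))
    have hBsat : ∀ b ∈ RB, w (Sum.inr b) = ∑ a, f a b := by
      intro b hb
      exact (reach_saturated hf hmax (Finset.mem_filter.1 hb).2).symm
    rw [Finset.sum_congr rfl hAsat, Finset.sum_congr rfl hBsat]
    -- key exchange
    have hkey : ∑ a ∈ RA, ∑ b, f a b = ∑ b ∈ RB, ∑ a, f a b := by
      have h1 : ∀ a ∈ RA, ∑ b, f a b = ∑ b ∈ RB, f a b := by
        intro a ha
        refine (Finset.sum_subset (Finset.subset_univ RB) fun b _ hb => ?_).symm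
        by_contra hz
        have hpos : 0 < f a b := lt_of_le_of_ne (hf.1 a b) (Ne.symm hz)
        have hE : E a b := by
          by_contra hE; exact hz (hf.2.1 a b hE)
        exact hb (Finset.mem_filter.2 ⟨Finset.mem_univ _,
          Reach.fwd a b (Finset.mem_filter.1 ha).2 hE⟩)
      have h2 : ∀ b ∈ RB, ∑ a, f a b = ∑ a ∈ RA, f a b := by
        intro b hb
        refine (Finset.sum_subset (Finset.subset_univ RA) fun a _ ha => ?_).symm
        by_contra hz
        have hpos : 0 < f a b := lt_of_le_of_ne (hf.1 a b) (Ne.symm hz)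
        exact ha (Finset.mem_filter.2 ⟨Finset.mem_univ _,
          Reach.bwd a b (Finset.mem_filter.1 hb).2 hpos⟩)
      rw [Finset.sum_congr rfl h1, Finset.sum_congr rfl h2, Finset.sum_comm]
    have hsplit : ∑ a, ∑ b, f a b = (∑ a ∈ RA, ∑ b, f a b) + ∑ a ∈ RAᶜ, ∑ b, f a b := by
      rw [hRA, Finset.compl_filter]
      exact (Finset.sum_filter_add_sum_filter_not univ _ _).symm
    rw [hsplit, hkey]
    ring

lemma weak_duality {E : A → B → Prop} {w : A ⊕ B → ℝ} (hw : ∀ v, 0 ≤ w v)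
    {g : A → B → ℝ} (hg : g ∈ Feas E w) {S : Finset (A ⊕ B)}
    (hS : ∀ a b, E a b → Sum.inl a ∈ S ∨ Sum.inr b ∈ S) :
    (∑ a, ∑ b, g a b) ≤ ∑ v ∈ S, w v := by
  classical
  set SA : Finset A := univ.filter (fun a => Sum.inl a ∈ S) with hSA
  set SB : Finset B := univ.filter (fun b => Sum.inr b ∈ S) with hSB
  have hsplit : ∑ a, ∑ b, g a b = (∑ a ∈ SA, ∑ b, g a b) + ∑ a ∈ SAᶜ, ∑ b, g a b := by
    rw [hSA, Finset.compl_filter]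
    exact (Finset.sum_filter_add_sum_filter_not univ _ _).symm
  have h1 : ∑ a ∈ SA, ∑ b, g a b ≤ ∑ a ∈ SA, w (Sum.inl a) :=
    Finset.sum_le_sum fun a _ => hg.2.2.1 a
  have h2 : ∑ a ∈ SAᶜ, ∑ b, g a b ≤ ∑ b ∈ SB, w (Sum.inr b) := by
    have hz : ∀ a ∈ SAᶜ, ∑ b, g a b = ∑ b ∈ SB, g a b := by
      intro a ha
      refine (Finset.sum_subset (Finset.subset_univ SB) fun b _ hb => ?_).symm
      by_contra hzz
      have hE : E a b := by
        by_contra hE; exact hzz (hg.2.1 a b hE)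
      rcases hS a b hE with h | h
      · have hnot : Sum.inl a ∉ S := by simpa [hSA] using Finset.mem_compl.1 ha
        exact hnot h
      · exact hb (Finset.mem_filter.2 ⟨Finset.mem_univ _, h⟩)
    rw [Finset.sum_congr rfl hz, Finset.sum_comm]
    refine Finset.sum_le_sum fun b _ => ?_
    calc ∑ a ∈ SAᶜ, g a b ≤ ∑ a, g a b :=
          Finset.sum_le_sum_of_subset_of_nonneg (Finset.subset_univ _)
            (fun a _ _ => hg.1 a b)
      _ ≤ w (Sum.inr b) := hg.2.2.2 b
  have h3 : (∑ a ∈ SA, w (Sum.inl a)) + ∑ b ∈ SB, w (Sum.inr b) ≤ ∑ v ∈ S, w v := by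
    have hdisj : Disjoint (SA.map ⟨Sum.inl, Sum.inl_injective⟩)
        (SB.map ⟨Sum.inr, Sum.inr_injective⟩) := by
      simp only [Finset.disjoint_left, Finset.mem_map]
      rintro v ⟨a, _, rfl⟩ ⟨b, _, h⟩
      exact Sum.inl_ne_inr h.symm
    have hsub : (SA.map ⟨Sum.inl, Sum.inl_injective⟩) ∪ (SB.map ⟨Sum.inr, Sum.inr_injective⟩)
        ⊆ S := by
      intro v hv
      rcases Finset.mem_union.1 hv with h | h <;>
        obtain ⟨x, hx, rfl⟩ := Finset.mem_map.1 h
      · exact (Finset.mem_filter.1 hx).2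
      · exact (Finset.mem_filter.1 hx).2
    have heq : (∑ a ∈ SA, w (Sum.inl a)) + ∑ b ∈ SB, w (Sum.inr b)
        = ∑ v ∈ (SA.map ⟨Sum.inl, Sum.inl_injective⟩) ∪ (SB.map ⟨Sum.inr, Sum.inr_injective⟩),
            w v := by
      rw [Finset.sum_union hdisj, Finset.sum_map, Finset.sum_map]
      rfl
    rw [heq]
    exact Finset.sum_le_sum_of_subset_of_nonneg hsub (fun v _ _ => hw v)
  linarith

lemma feas_isCompact (E : A → B → Prop) (w : A ⊕ B → ℝ) (hw : ∀ v, 0 ≤ w v) :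
    IsCompact (Feas E w) := by
  classical
  have hK : IsCompact (Set.pi Set.univ fun a : A =>
      (Set.pi Set.univ fun _ : B => Set.Icc (0:ℝ) (w (Sum.inl a)))) :=
    isCompact_univ_pi fun a => isCompact_univ_pi fun _ => isCompact_Icc
  have hsub : Feas E w ⊆ Set.pi Set.univ fun a : A =>
      (Set.pi Set.univ fun _ : B => Set.Icc (0:ℝ) (w (Sum.inl a))) := by
    intro f hf a _
    intro b _
    refine ⟨hf.1 a b, ?_⟩
    calc f a b ≤ ∑ b', f a b' :=
          Finset.single_le_sum (fun b' _ => hf.1 a b') (Finset.mem_univ b)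
      _ ≤ w (Sum.inl a) := hf.2.2.1 a
  have hcl : IsClosed (Feas E w) := by
    have e1 : IsClosed {f : A → B → ℝ | ∀ a b, 0 ≤ f a b} := by
      have : {f : A → B → ℝ | ∀ a b, 0 ≤ f a b} = ⋂ a, ⋂ b, {f | 0 ≤ f a b} := by
        ext f; simp [Set.mem_iInter]
      rw [this]
      exact isClosed_iInter fun a => isClosed_iInter fun b =>
        isClosed_le continuous_const ((continuous_apply b).comp (continuous_apply a))
    have e2 : IsClosed {f : A → B → ℝ | ∀ a b, ¬ E a b → f a b = 0} := by
      have : {f : A → B → ℝ | ∀ a b, ¬ E a b → f a b = 0}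
          = ⋂ a, ⋂ b, {f | ¬ E a b → f a b = 0} := by
        ext f; simp [Set.mem_iInter]
      rw [this]
      refine isClosed_iInter fun a => isClosed_iInter fun b => ?_
      by_cases hE : E a b
      · have : {f : A → B → ℝ | ¬ E a b → f a b = 0} = Set.univ := by
          ext f; simp [hE]
        rw [this]; exact isClosed_univ
      · have : {f : A → B → ℝ | ¬ E a b → f a b = 0} = {f | f a b = 0} := by
          ext f; simp [hE]
        rw [this]
        exact isClosed_eq ((continuous_apply b).comp (continuous_apply a)) continuous_const
    have e3 : IsClosed {f : A → B → ℝ | ∀ a, ∑ b, f a b ≤ w (Sum.inl a)} := by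
      have : {f : A → B → ℝ | ∀ a, ∑ b, f a b ≤ w (Sum.inl a)}
          = ⋂ a, {f | ∑ b, f a b ≤ w (Sum.inl a)} := by
        ext f; simp [Set.mem_iInter]
      rw [this]
      exact isClosed_iInter fun a => isClosed_le
        (continuous_finset_sum _ fun b _ => (continuous_apply b).comp (continuous_apply a))
        continuous_const
    have e4 : IsClosed {f : A → B → ℝ | ∀ b, ∑ a, f a b ≤ w (Sum.inr b)} := by
      have : {f : A → B → ℝ | ∀ b, ∑ a, f a b ≤ w (Sum.inr b)}
          = ⋂ b, {f | ∑ a, f a b ≤ w (Sum.inr b)} := by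
        ext f; simp [Set.mem_iInter]
      rw [this]
      exact isClosed_iInter fun b => isClosed_le
        (continuous_finset_sum _ fun a _ => (continuous_apply b).comp (continuous_apply a))
        continuous_const
    have : Feas E w = {f : A → B → ℝ | ∀ a b, 0 ≤ f a b}
        ∩ ({f | ∀ a b, ¬ E a b → f a b = 0}
        ∩ ({f | ∀ a, ∑ b, f a b ≤ w (Sum.inl a)}
        ∩ {f | ∀ b, ∑ a, f a b ≤ w (Sum.inr b)})) := by
      ext f
      simp only [Feas, Set.mem_setOf_eq, Set.mem_inter_iff]
    rw [this]
    exact e1.inter (e2.inter (e3.inter e4))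
  exact hK.of_isClosed_subset hcl hsub

end WKonig

/-- Weighted König duality / max-flow min-cut for finite bipartite graphs:
the minimum weight of a vertex cover equals the maximum value of a fractional
matching (equivalently, the max-flow in the associated source–sink network). -/
theorem weighted_konig_minCover_eq_maxFractionalMatching
    {A B : Type*} [Fintype A] [Fintype B] [DecidableEq A] [DecidableEq B]
    (E : A → B → Prop) (w : A ⊕ B → ℝ) (hw : ∀ v, 0 ≤ w v) :
    sInf {c : ℝ | ∃ S : Finset (A ⊕ B),
        (∀ a b, E a b → Sum.inl a ∈ S ∨ Sum.inr b ∈ S) ∧ c = ∑ v ∈ S, w v}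
      = sSup {c : ℝ | ∃ f : A → B → ℝ,
        (∀ a b, 0 ≤ f a b) ∧
        (∀ a b, ¬ E a b → f a b = 0) ∧
        (∀ a, ∑ b, f a b ≤ w (Sum.inl a)) ∧
        (∀ b, ∑ a, f a b ≤ w (Sum.inr b)) ∧
        c = ∑ a, ∑ b, f a b} := by
  classical
  set Cset := {c : ℝ | ∃ S : Finset (A ⊕ B),
      (∀ a b, E a b → Sum.inl a ∈ S ∨ Sum.inr b ∈ S) ∧ c = ∑ v ∈ S, w v} with hCset
  set Mset := {c : ℝ | ∃ f : A → B → ℝ,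
      (∀ a b, 0 ≤ f a b) ∧ (∀ a b, ¬ E a b → f a b = 0) ∧
      (∀ a, ∑ b, f a b ≤ w (Sum.inl a)) ∧ (∀ b, ∑ a, f a b ≤ w (Sum.inr b)) ∧
      c = ∑ a, ∑ b, f a b} with hMset
  have hMmem : ∀ {c : ℝ}, c ∈ Mset ↔ ∃ f ∈ WKonig.Feas E w, c = ∑ a, ∑ b, f a b := by
    intro c
    constructor
    · rintro ⟨f, h1, h2, h3, h4, h5⟩; exact ⟨f, ⟨h1, h2, h3, h4⟩, h5⟩
    · rintro ⟨f, ⟨h1, h2, h3, h4⟩, h5⟩; exact ⟨f, h1, h2, h3, h4, h5⟩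
  -- existence of a maximizer
  have hFne : (WKonig.Feas E w).Nonempty := by
    refine ⟨0, fun a b => le_refl 0, fun a b _ => rfl, ?_, ?_⟩ <;> intro x <;> simp [hw _]
  have hcont : ContinuousOn (fun f : A → B → ℝ => ∑ a, ∑ b, f a b) (WKonig.Feas E w) :=
    (continuous_finset_sum _ fun a _ => continuous_finset_sum _ fun b _ =>
      (continuous_apply b).comp (continuous_apply a)).continuousOn
  obtain ⟨f₀, hf₀, hmaxOn⟩ :=
    (WKonig.feas_isCompact E w hw).exists_isMaxOn hFne hcont
  have hmax : ∀ g ∈ WKonig.Feas E w, (∑ a, ∑ b, g a b) ≤ ∑ a, ∑ b, f₀ a b :=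
    fun g hg => hmaxOn hg
  -- the min cut
  obtain ⟨S₀, hS₀cov, hS₀val⟩ := WKonig.cut_exists hf₀ hmax
  have hCne : Cset.Nonempty := ⟨∑ v ∈ S₀, w v, S₀, hS₀cov, rfl⟩
  have hMne : Mset.Nonempty := by
    refine ⟨∑ a, ∑ b, f₀ a b, hMmem.2 ⟨f₀, hf₀, rfl⟩⟩
  have hweak : ∀ m ∈ Mset, ∀ c ∈ Cset, m ≤ c := by
    rintro m hm c ⟨S, hScov, rfl⟩
    obtain ⟨g, hg, rfl⟩ := hMmem.1 hm
    exact WKonig.weak_duality hw hg hScov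
  have hMbdd : BddAbove Mset := ⟨∑ v ∈ S₀, w v, fun m hm => hweak m hm _ ⟨S₀, hS₀cov, rfl⟩⟩
  have hCbdd : BddBelow Cset := by
    refine ⟨0, ?_⟩
    rintro c ⟨S, _, rfl⟩
    exact Finset.sum_nonneg fun v _ => hw v
  have hsSup : sSup Mset = ∑ a, ∑ b, f₀ a b := by
    refine le_antisymm (csSup_le hMne ?_) (le_csSup hMbdd (hMmem.2 ⟨f₀, hf₀, rfl⟩))
    intro m hm
    obtain ⟨g, hg, rfl⟩ := hMmem.1 hm
    exact hmax g hg
  refine le_antisymm ?_ ?_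
  · calc sInf Cset ≤ ∑ v ∈ S₀, w v := csInf_le hCbdd ⟨S₀, hS₀cov, rfl⟩
      _ = ∑ a, ∑ b, f₀ a b := hS₀val
      _ = sSup Mset := hsSup.symm
  · exact le_csInf hCne fun c hc => csSup_le hMne fun m hm => hweak m hm c hc
end

section
/- A flow f in a network is maximum if and only if the residual network of f contains no augmenting path from source to sink. -/
/-!
If some `s`–`t` path has positive residual capacity on every edge, it can be taken simple;
pushing a small `δ > 0` along it, each edge first cancelling reverse flow, gives a flow of
value `δ` more. Otherwise let `S` be the set of vertices reachable from `s` in the residual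
network. Every edge leaving `S` is saturated and every edge entering it is empty, so edge by
edge the net flow of `f` across the cut `(S, Sᶜ)` dominates that of any other flow; and the
value of a flow is its net flow across any cut separating `s` from `t`.
-/

open Finset

/-- `f` is a valid flow in the network with capacities `c`, source `s`, sink `t`. -/
def IsFlow {V : Type*} [Fintype V] (c : V → V → ℝ) (s t : V) (f : V → V → ℝ) : Prop :=
  (∀ u v, 0 ≤ f u v ∧ f u v ≤ c u v) ∧
  (∀ v, v ≠ s → v ≠ t → (∑ u, f u v) = ∑ u, f v u)

/-- Residual capacity of the flow `f` w.r.t. capacities `c`. -/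
def resCap {V : Type*} (c f : V → V → ℝ) (u v : V) : ℝ :=
  c u v - f u v + f v u

/-- The value of a flow: net flow out of the source. -/
def flowValue {V : Type*} [Fintype V] (f : V → V → ℝ) (s : V) : ℝ :=
  (∑ v, f s v) - ∑ v, f v s

namespace List

theorem exists_isChain_cons_nodup_of_relationReflTransGen {α : Type*} {r : α → α → Prop}
    {a b : α} (h : Relation.ReflTransGen r a b) :
    ∃ l, IsChain r (a :: l) ∧ (a :: l).Nodup ∧ getLast (a :: l) (cons_ne_nil _ _) = b := by
  refine Relation.ReflTransGen.head_induction_on h ⟨[], .singleton _, nodup_singleton _, rfl⟩ ?_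
  rintro a d had - ⟨l, hchain, hnodup, hlast⟩
  by_cases ha : a ∈ d :: l
  · obtain ⟨p, q, hpq⟩ := append_of_mem ha
    rw [hpq] at hchain hnodup
    refine ⟨q, hchain.right_of_append, hnodup.sublist (sublist_append_right _ _), ?_⟩
    simpa [hpq] using hlast
  · exact ⟨d :: l, hchain.cons_cons had, nodup_cons.2 ⟨ha, hnodup⟩, by rwa [getLast_cons_cons]⟩

end List

theorem Finite.exists_pos_le_of_pos {ι : Type*} [Finite ι] (r : ι → ℝ) :
    ∃ δ > 0, ∀ i, 0 < r i → δ ≤ r i := by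
  by_cases h : ∃ i, 0 < r i
  · obtain ⟨i, hi⟩ := h
    have : Nonempty {i // 0 < r i} := ⟨⟨i, hi⟩⟩
    obtain ⟨⟨j, hj⟩, hmin⟩ := Finite.exists_min (fun i : {i // 0 < r i} => r i)
    exact ⟨r j, hj, fun k hk => hmin ⟨k, hk⟩⟩
  · exact ⟨1, one_pos, fun i hi => absurd ⟨i, hi⟩ h⟩

section Flow

variable {V : Type*}

def WithinCapacity (c f : V → V → ℝ) : Prop :=
  ∀ u v, 0 ≤ f u v ∧ f u v ≤ c u v

-- `flowValue f v` is the net outflow of `f` at an arbitrary vertex `v`.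
theorem isFlow_iff [Fintype V] {c f : V → V → ℝ} {s t : V} :
    IsFlow c s t f ↔ WithinCapacity c f ∧ ∀ v, v ≠ s → v ≠ t → flowValue f v = 0 := by
  simp only [IsFlow, WithinCapacity, flowValue, sub_eq_zero, eq_comm (a := ∑ u, f u _)]

theorem flowValue_add [Fintype V] (f g : V → V → ℝ) (v : V) :
    flowValue (f + g) v = flowValue f v + flowValue g v := by
  simp only [flowValue, Pi.add_apply, sum_add_distrib]
  ring

theorem flowValue_sub [Fintype V] (f g : V → V → ℝ) (v : V) :
    flowValue (f - g) v = flowValue f v - flowValue g v := by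
  simp only [flowValue, Pi.sub_apply, sum_sub_distrib]
  ring

theorem flowValue_single [Fintype V] [DecidableEq V] (a b v : V) (x : ℝ) :
    flowValue (Pi.single a (Pi.single b x) : V → V → ℝ) v =
      (if v = a then x else 0) - if v = b then x else 0 := by
  have hout : ∑ w, (Pi.single a (Pi.single b x) : V → V → ℝ) v w = if v = a then x else 0 := by
    rw [Pi.single_apply]
    split_ifs <;> simp
  have hin : ∑ w, (Pi.single a (Pi.single b x) : V → V → ℝ) w v = if v = b then x else 0 := by
    rw [← Finset.sum_apply, Finset.sum_pi_single']
    simp [Pi.single_apply]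
  rw [flowValue, hout, hin]

section Augment

variable [DecidableEq V]

def augmentEdge (f : V → V → ℝ) (a b : V) (δ : ℝ) : V → V → ℝ :=
  f + Pi.single a (Pi.single b (δ - min δ (f b a))) - Pi.single b (Pi.single a (min δ (f b a)))

theorem augmentEdge_apply (f : V → V → ℝ) (a b : V) (δ : ℝ) (x y : V) :
    augmentEdge f a b δ x y = f x y + (if x = a ∧ y = b then δ - min δ (f b a) else 0) -
      if x = b ∧ y = a then min δ (f b a) else 0 := by
  simp only [augmentEdge, Pi.sub_apply, Pi.add_apply, Pi.single_apply, ite_and]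
  split_ifs <;> simp_all

theorem flowValue_augmentEdge [Fintype V] (f : V → V → ℝ) (a b v : V) (δ : ℝ) :
    flowValue (augmentEdge f a b δ) v =
      flowValue f v + (if v = a then δ else 0) - if v = b then δ else 0 := by
  simp only [augmentEdge, flowValue_sub, flowValue_add, flowValue_single]
  split_ifs <;> ring

theorem resCap_augmentEdge_of_ne (c f : V → V → ℝ) {a b x y : V} (δ : ℝ) (hx : x ≠ a)
    (hy : y ≠ a) : resCap c (augmentEdge f a b δ) x y = resCap c f x y := by
  simp [resCap, augmentEdge_apply, hx, hy]

theorem withinCapacity_augmentEdge {c f : V → V → ℝ} (hf : WithinCapacity c f) {a b : V}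
    (hab : a ≠ b) {δ : ℝ} (hδ : 0 ≤ δ) (hδc : δ ≤ resCap c f a b) :
    WithinCapacity c (augmentEdge f a b δ) := by
  intro x y
  rw [augmentEdge_apply]
  obtain ⟨hab₀, habc⟩ := hf a b
  obtain ⟨hba₀, -⟩ := hf b a
  have hm : min δ (f b a) ≤ δ := min_le_left _ _
  have hm' : min δ (f b a) ≤ f b a := min_le_right _ _
  have hm₀ : 0 ≤ min δ (f b a) := le_min hδ hba₀
  have hδm : δ - min δ (f b a) ≤ c a b - f a b := by
    rcases le_total δ (f b a) with h | h
    · simpa [min_eq_left h] using habc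
    · rw [min_eq_right h]
      unfold resCap at hδc
      linarith
  by_cases hxy : x = a ∧ y = b
  · obtain ⟨rfl, rfl⟩ := hxy
    simp only [hab, hab.symm, and_self, ↓reduceIte]
    constructor <;> linarith
  by_cases hyx : x = b ∧ y = a
  · obtain ⟨rfl, rfl⟩ := hyx
    simp only [hab, hab.symm, and_self, ↓reduceIte]
    constructor <;> linarith [hf x y]
  simpa [hxy, hyx] using hf x y

theorem WithinCapacity.exists_augment_path [Fintype V] {c : V → V → ℝ} {δ : ℝ} (hδ : 0 ≤ δ)
    {f : V → V → ℝ} {u : V} {l : List V} (hf : WithinCapacity c f) (hnodup : (u :: l).Nodup)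
    (hchain : (u :: l).IsChain fun x y => δ ≤ resCap c f x y) :
    ∃ g, WithinCapacity c g ∧ ∀ v, flowValue g v = flowValue f v + (if v = u then δ else 0) -
      if v = (u :: l).getLast (List.cons_ne_nil _ _) then δ else 0 := by
  induction l generalizing f u with
  | nil => exact ⟨f, hf, fun v => by split_ifs <;> simp_all⟩
  | cons b l ih =>
    rw [List.isChain_cons_cons] at hchain
    rw [List.nodup_cons] at hnodup
    have hub : u ≠ b := fun h => hnodup.1 (h ▸ List.mem_cons_self)
    -- the edges of the rest of the path avoid `u`, so their residual capacities are unchanged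
    have htail : (b :: l).IsChain fun x y => δ ≤ resCap c (augmentEdge f u b δ) x y :=
      hchain.2.imp_of_mem_imp fun x y hx hy h => by
        rwa [resCap_augmentEdge_of_ne _ _ _ (by rintro rfl; exact hnodup.1 hx)
          (by rintro rfl; exact hnodup.1 hy)]
    obtain ⟨g, hg, hgv⟩ := ih (withinCapacity_augmentEdge hf hub hδ hchain.1) hnodup.2 htail
    refine ⟨g, hg, fun v => ?_⟩
    rw [hgv, flowValue_augmentEdge, List.getLast_cons_cons]
    ring

end Augment

variable [Fintype V] {c f g : V → V → ℝ} {s t : V}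

theorem IsFlow.exists_flowValue_gt_of_reflTransGen (hf : IsFlow c s t f) (hst : s ≠ t)
    (hpath : Relation.ReflTransGen (fun u v => 0 < resCap c f u v) s t) :
    ∃ g, IsFlow c s t g ∧ flowValue f s < flowValue g s := by
  classical
  obtain ⟨δ, hδ, hδle⟩ := Finite.exists_pos_le_of_pos fun p : V × V => resCap c f p.1 p.2
  obtain ⟨l, hchain, hnodup, hlast⟩ := List.exists_isChain_cons_nodup_of_relationReflTransGen hpath
  obtain ⟨g, hg, hgv⟩ := (isFlow_iff.1 hf).1.exists_augment_path hδ.le hnodup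
    (hchain.imp fun x y h => hδle (x, y) h)
  rw [hlast] at hgv
  refine ⟨g, isFlow_iff.2 ⟨hg, fun v hvs hvt => ?_⟩, ?_⟩
  · rw [hgv, if_neg hvs, if_neg hvt, (isFlow_iff.1 hf).2 v hvs hvt]
    ring
  · rw [hgv, if_pos rfl, if_neg hst]
    linarith

theorem sum_flowValue_eq_sum_compl [DecidableEq V] (f : V → V → ℝ) (S : Finset V) :
    ∑ u ∈ S, flowValue f u = ∑ u ∈ S, ∑ v ∈ Sᶜ, (f u v - f v u) := by
  have hinner : ∑ u ∈ S, ∑ v ∈ S, (f u v - f v u) = 0 := by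
    simp only [sum_sub_distrib]
    exact sub_eq_zero.2 sum_comm
  calc ∑ u ∈ S, flowValue f u = ∑ u ∈ S, ∑ v, (f u v - f v u) := by
        simp only [flowValue, sum_sub_distrib]
    _ = ∑ u ∈ S, ∑ v ∈ S, (f u v - f v u) + ∑ u ∈ S, ∑ v ∈ Sᶜ, (f u v - f v u) := by
        rw [← sum_add_distrib]
        simp only [sum_add_sum_compl]
    _ = ∑ u ∈ S, ∑ v ∈ Sᶜ, (f u v - f v u) := by rw [hinner, zero_add]

theorem IsFlow.flowValue_eq_sum_compl [DecidableEq V] (hf : IsFlow c s t f) {S : Finset V}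
    (hs : s ∈ S) (ht : t ∉ S) : flowValue f s = ∑ u ∈ S, ∑ v ∈ Sᶜ, (f u v - f v u) := by
  rw [← sum_flowValue_eq_sum_compl, sum_eq_single_of_mem s hs]
  exact fun u hu hus => (isFlow_iff.1 hf).2 u hus (ne_of_mem_of_not_mem hu ht)

theorem IsFlow.flowValue_le_of_resCap_nonpos [DecidableEq V] (hf : IsFlow c s t f)
    (hg : IsFlow c s t g) {S : Finset V} (hs : s ∈ S) (ht : t ∉ S)
    (hcut : ∀ u ∈ S, ∀ v ∉ S, resCap c f u v ≤ 0) : flowValue g s ≤ flowValue f s := by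
  rw [hg.flowValue_eq_sum_compl hs ht, hf.flowValue_eq_sum_compl hs ht]
  refine sum_le_sum fun u hu => sum_le_sum fun v hv => ?_
  have huv := hcut u hu v (mem_compl.1 hv)
  unfold resCap at huv
  linarith [hg.1 u v, hg.1 v u]

theorem IsFlow.flowValue_le_of_not_reflTransGen (hf : IsFlow c s t f)
    (hno : ¬Relation.ReflTransGen (fun u v => 0 < resCap c f u v) s t) (hg : IsFlow c s t g) :
    flowValue g s ≤ flowValue f s := by
  classical
  let S := univ.filter (Relation.ReflTransGen (fun u v => 0 < resCap c f u v) s)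
  refine hf.flowValue_le_of_resCap_nonpos hg (S := S) (mem_filter.2 ⟨mem_univ _, .refl⟩)
    (by simpa [S]) fun u hu v hv => not_lt.1 fun h => hv ?_
  exact mem_filter.2 ⟨mem_univ _, (mem_filter.1 hu).2.tail h⟩

end Flow

theorem maxflow_iff_no_augmenting_path_general
    {V : Type*} [Fintype V] (c : V → V → ℝ) (s t : V) (hst : s ≠ t)
    (f : V → V → ℝ) (hf : IsFlow c s t f) :
    (∀ g, IsFlow c s t g → flowValue g s ≤ flowValue f s) ↔
      ¬ Relation.ReflTransGen (fun u v => 0 < resCap c f u v) s t := by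
  refine ⟨fun hmax hpath => ?_, fun hno g hg => hf.flowValue_le_of_not_reflTransGen hno hg⟩
  obtain ⟨g, hg, hlt⟩ := hf.exists_flowValue_gt_of_reflTransGen hst hpath
  exact (hmax g hg).not_gt hlt

/-- A flow is maximum iff the resCap network contains no augmenting path
from the source to the sink (i.e. no path of positive resCap capacity). -/
theorem maxflow_iff_no_augmenting_path
    {V : Type*} [Fintype V] (c : V → V → ℝ) (s t : V) (hst : s ≠ t)
    (hc : ∀ u v, 0 ≤ c u v) (f : V → V → ℝ) (hf : IsFlow c s t f) :
    (∀ g, IsFlow c s t g → flowValue g s ≤ flowValue f s) ↔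
      ¬ Relation.ReflTransGen (fun u v => 0 < resCap c f u v) s t :=
  maxflow_iff_no_augmenting_path_general c s t hst f hf
end

section
/- The Edmonds–Karp algorithm (Ford–Fulkerson with shortest augmenting paths by edge count) performs at most O(n·m) augmentations on a network with n vertices and m edges, and hence runs in O(n·m²) time. -/
open Finset

/-- The consecutive pairs (edges) of a vertex path. -/
def pathPairs {V : Type*} (p : List V) : List (V × V) := p.zip p.tail

/-- `p` is an augmenting path from `s` to `t` in the resCap network of `f`. -/
def IsAugPath {V : Type*} (c f : V → V → ℝ) (s t : V) (p : List V) : Prop :=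
  p.head? = some s ∧ p.getLast? = some t ∧ 2 ≤ p.length ∧ p.Nodup ∧
  ∀ e ∈ pathPairs p, 0 < resCap c f e.1 e.2

/-- Push `ε` units of flow along the path `p` (cancelling reverse flow). -/
def augmentFlow {V : Type*} [DecidableEq V] (f : V → V → ℝ) (p : List V) (ε : ℝ) :
    V → V → ℝ :=
  fun u v => f u v + (if (u, v) ∈ pathPairs p then ε else 0)
    - (if (v, u) ∈ pathPairs p then ε else 0)

/-- One Edmonds–Karp step: augment along a *shortest* augmenting path by the
bottleneck resCap capacity. -/
def EKStep {V : Type*} [Fintype V] [DecidableEq V] (c : V → V → ℝ) (s t : V)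
    (f f' : V → V → ℝ) : Prop :=
  ∃ (p : List V) (ε : ℝ),
    IsAugPath c f s t p ∧
    (∀ q : List V, IsAugPath c f s t q → p.length ≤ q.length) ∧
    0 < ε ∧
    (∀ e ∈ pathPairs p, ε ≤ resCap c f e.1 e.2) ∧
    (∃ e ∈ pathPairs p, ε = resCap c f e.1 e.2) ∧
    f' = augmentFlow f p ε

/-!
Every augmentation saturates an edge `(u, v)` of its shortest path, so `d v = d u + 1` for the
residual distance `d` from `s`. Residual distances never decrease along the run, and `(u, v)` can
only become residual again after an augmentation along a shortest path through `(v, u)`, which then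
has `d u = d v + 1`; hence `d u` has grown by at least 2 when `(u, v)` is saturated the next time.
As `d u ≤ n - 2`, every pair is saturated at most `n / 2` times, and only the at most `2m` pairs
carrying positive capacity in one of their two directions ever become residual.
-/

theorem Nat.exists_not_and_succ_between {P : ℕ → Prop} {a b : ℕ} (hab : a ≤ b) (ha : ¬P a)
    (hb : P b) : ∃ j, a ≤ j ∧ j < b ∧ ¬P j ∧ P (j + 1) := by
  by_contra! h
  suffices ∀ j, a ≤ j → j ≤ b → ¬P j from this b hab le_rfl hb
  intro j hj
  induction j, hj using Nat.le_induction with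
  | base => exact fun _ => ha
  | succ j hj ih => exact fun hjb => h j hj (by omega) (ih (by omega))

theorem card_filter_or_swap_le {α : Type*} [Fintype α] (P : α × α → Prop) [DecidablePred P] :
    #{e | P e ∨ P e.swap} ≤ 2 * #{e | P e} := by
  classical
  rw [Finset.filter_or, two_mul]
  refine (card_union_le _ _).trans (add_le_add_right ?_ _)
  exact card_le_card_of_injOn Prod.swap (fun e he => by simpa using he) Prod.swap_injective.injOn

theorem card_le_card_mul_div_two_of_gap {ι β : Type*} [Fintype ι] [LinearOrder ι] {E : Finset β}
    {n : ℕ} (e : ι → β) (i : ι → ℕ) (he : ∀ k, e k ∈ E) (hi : ∀ k, i k + 2 ≤ n)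
    (hgap : ∀ a b, a < b → e a = e b → i a + 2 ≤ i b) : Fintype.card ι ≤ #E * (n / 2) := by
  have hinj : Function.Injective fun k => (e k, i k / 2) := by
    intro a b hab
    simp only [Prod.mk.injEq] at hab
    rcases lt_trichotomy a b with h | h | h
    · have := hgap a b h hab.1; omega
    · exact h
    · have := hgap b a h hab.1.symm; omega
  have hmaps : ∀ k ∈ univ, (e k, i k / 2) ∈ E ×ˢ range (n / 2) := fun k _ => by
    have := hi k
    simpa [he k] using by omega
  simpa using card_le_card_of_injOn _ hmaps hinj.injOn

section Walks

variable {α : Type*} {R : α → α → Prop}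

def ReachableWithin (R : α → α → Prop) (m : ℕ) (a b : α) : Prop :=
  ∃ l : List α, l.head? = some a ∧ l.getLast? = some b ∧ l.IsChain R ∧ l.length ≤ m + 1

theorem ReachableWithin.mono {m n : ℕ} {a b : α} (h : ReachableWithin R m a b) (hmn : m ≤ n) :
    ReachableWithin R n a b :=
  h.imp fun _ ⟨ha, hb, hl, hlen⟩ => ⟨ha, hb, hl, by omega⟩

theorem ReachableWithin.refl (a : α) : ReachableWithin R 0 a a :=
  ⟨[a], rfl, rfl, .singleton a, le_rfl⟩

theorem ReachableWithin.single {a b : α} (h : R a b) : ReachableWithin R 1 a b :=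
  ⟨[a, b], rfl, rfl, List.isChain_pair.2 h, le_rfl⟩

theorem ReachableWithin.trans {m n : ℕ} {a b c : α} (hab : ReachableWithin R m a b)
    (hbc : ReachableWithin R n b c) : ReachableWithin R (m + n) a c := by
  obtain ⟨l₁, ha, hb, hl₁, hlen₁⟩ := hab
  obtain ⟨l₂, hb', hc, hl₂, hlen₂⟩ := hbc
  obtain ⟨l₁, rfl⟩ := List.getLast?_eq_some_iff.1 hb
  obtain ⟨l₂, rfl⟩ := List.head?_eq_some_iff.1 hb'
  refine ⟨l₁ ++ b :: l₂, by simpa using ha, by simpa using hc, ?_, by simp at hlen₁ hlen₂ ⊢; omega⟩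
  simpa using hl₁.append_overlap (l₂ := [b]) hl₂ (by simp)

theorem List.IsChain.reachableWithin_head_getElem {l : List α} {a : α} (hl : l.IsChain R)
    (ha : l.head? = some a) (i : ℕ) (hi : i < l.length) : ReachableWithin R i a l[i] :=
  ⟨l.take (i + 1), by simpa [List.head?_take] using ha, by simp [List.getLast?_take, hi],
    hl.take _, by simp⟩

theorem List.IsChain.reachableWithin_getElem_getLast {l : List α} {b : α} (hl : l.IsChain R)
    (hb : l.getLast? = some b) (i : ℕ) (hi : i < l.length) :
    ReachableWithin R (l.length - 1 - i) l[i] b :=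
  ⟨l.drop i, by simp [hi], by simp [List.getLast?_drop, hb]; omega, hl.drop _, by simp; omega⟩

theorem List.IsChain.exists_nodup_sublist {l : List α} (hl : l.IsChain R) :
    ∃ l' : List α, l'.Sublist l ∧ l'.Nodup ∧ l'.IsChain R ∧ l'.head? = l.head? ∧
      l'.getLast? = l.getLast? := by
  induction l with
  | nil => exact ⟨[], .refl _, by simp, .nil, rfl, rfl⟩
  | cons a l ih =>
    by_cases hne : l = []
    · subst hne
      exact ⟨[a], .refl _, by simp, .singleton a, rfl, rfl⟩
    obtain ⟨l', hsub, hnd, hch, hhead, hlast⟩ := ih hl.tail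
    by_cases ha : a ∈ l'
    · obtain ⟨l₁, l₂, rfl⟩ := List.append_of_mem ha
      refine ⟨a :: l₂, ?_, hnd.sublist (List.sublist_append_right _ _), hch.right_of_append,
        rfl, ?_⟩
      · exact ((List.sublist_cons_self a l₂).trans
          ((List.sublist_append_right l₁ _).trans hsub)).cons_cons a
      · rw [← List.getLast?_append_cons l₁, hlast, List.getLast?_cons_of_ne_nil hne]
    · refine ⟨a :: l', hsub.cons_cons a, List.nodup_cons.2 ⟨ha, hnd⟩, hch.cons ?_, rfl, ?_⟩
      · exact fun y hy => hl.rel_head? (hhead ▸ hy)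
      · have hne' : l' ≠ [] := by rintro rfl; exact hne (List.head?_eq_none_iff.1 hhead.symm)
        rw [List.getLast?_cons_of_ne_nil hne, List.getLast?_cons_of_ne_nil hne', hlast]

noncomputable def relDist (R : α → α → Prop) (a b : α) : ℕ∞ :=
  ⨅ (m : ℕ) (_ : ReachableWithin R m a b), (m : ℕ∞)

theorem ReachableWithin.relDist_le {m : ℕ} {a b : α} (h : ReachableWithin R m a b) :
    relDist R a b ≤ m :=
  iInf₂_le m h

theorem le_relDist {n : ℕ} {a b : α} (h : ∀ m, ReachableWithin R m a b → n ≤ m) :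
    (n : ℕ∞) ≤ relDist R a b :=
  le_iInf₂ fun m hm => by exact_mod_cast h m hm

end Walks

section Flows

variable {V : Type*} {c f : V → V → ℝ} {s t : V} {p : List V}

def ResidualAdj (c f : V → V → ℝ) (u v : V) : Prop := 0 < resCap c f u v

theorem mem_pathPairs_iff {e : V × V} :
    e ∈ pathPairs p ↔ ∃ i, ∃ h : i + 1 < p.length, (p[i], p[i + 1]) = e := by
  simp only [pathPairs, List.mem_iff_getElem, List.length_zip, List.length_tail, List.getElem_zip,
    List.getElem_tail]
  exact ⟨fun ⟨i, hi, he⟩ => ⟨i, by omega, he⟩, fun ⟨i, hi, he⟩ => ⟨i, by omega, he⟩⟩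

theorem forall_mem_pathPairs_iff_isChain {R : V → V → Prop} :
    (∀ e ∈ pathPairs p, R e.1 e.2) ↔ p.IsChain R := by
  simp only [List.isChain_iff_getElem, mem_pathPairs_iff]
  exact ⟨fun h i hi => h _ ⟨i, hi, rfl⟩, by rintro h e ⟨i, hi, rfl⟩; exact h i hi⟩

theorem swap_notMem_pathPairs_of_nodup (hp : p.Nodup) {u v : V} (h : (u, v) ∈ pathPairs p) :
    (v, u) ∉ pathPairs p := by
  intro h'
  obtain ⟨i, hi, he⟩ := mem_pathPairs_iff.1 h
  obtain ⟨j, hj, he'⟩ := mem_pathPairs_iff.1 h'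
  simp only [Prod.mk.injEq] at he he'
  rw [← he.1, ← he.2] at he'
  have h₁ := (hp.getElem_inj_iff (i := i) (j := j + 1)).1 he'.2.symm
  have h₂ := (hp.getElem_inj_iff (i := i + 1) (j := j)).1 he'.1.symm
  omega

theorem IsAugPath.isChain (hp : IsAugPath c f s t p) : p.IsChain (ResidualAdj c f) :=
  forall_mem_pathPairs_iff_isChain.1 hp.2.2.2.2

theorem IsAugPath.ne (hp : IsAugPath c f s t p) : s ≠ t := by
  obtain ⟨hs, ht, hlen, hnd, -⟩ := hp
  rw [List.head?_eq_getElem?, List.getElem?_eq_some_iff] at hs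
  rw [List.getLast?_eq_getElem?, List.getElem?_eq_some_iff] at ht
  obtain ⟨h₀, hs⟩ := hs
  obtain ⟨h₁, ht⟩ := ht
  intro hst
  have := hnd.getElem_inj_iff.1 (hs.trans (hst.trans ht.symm))
  omega

theorem IsAugPath.relDist_getElem (hp : IsAugPath c f s t p)
    (hmin : ∀ q, IsAugPath c f s t q → p.length ≤ q.length) (i : ℕ) (hi : i < p.length) :
    relDist (ResidualAdj c f) s p[i] = i := by
  refine le_antisymm (hp.isChain.reachableWithin_head_getElem hp.1 i hi).relDist_le ?_
  refine le_relDist fun m hm => ?_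
  obtain ⟨l, hs, ht, hl, hlen⟩ := hm.trans (hp.isChain.reachableWithin_getElem_getLast hp.2.1 i hi)
  obtain ⟨q, hsub, hnd, hq, hqs, hqt⟩ := hl.exists_nodup_sublist
  have hq2 : 2 ≤ q.length := by
    rcases q with _ | ⟨x, _ | ⟨y, q⟩⟩
    · simp_all
    · simp_all [hp.ne]
    · simp
  have := hmin q ⟨hqs.trans hs, hqt.trans ht, hq2, hnd, forall_mem_pathPairs_iff_isChain.2 hq⟩
  have := hsub.length_le
  omega

section Augmentation

variable [DecidableEq V] {ε : ℝ}

theorem resCap_augmentFlow (u v : V) :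
    resCap c (augmentFlow f p ε) u v = resCap c f u v
      - 2 * (if (u, v) ∈ pathPairs p then ε else 0)
      + 2 * (if (v, u) ∈ pathPairs p then ε else 0) := by
  simp only [resCap, augmentFlow]
  split_ifs <;> ring

theorem swap_mem_pathPairs_of_residualAdj_augmentFlow (hε : 0 ≤ ε) {u v : V}
    (h' : ResidualAdj c (augmentFlow f p ε) u v) (h : ¬ResidualAdj c f u v) :
    (v, u) ∈ pathPairs p := by
  by_contra hvu
  unfold ResidualAdj at h h'
  rw [resCap_augmentFlow, if_neg hvu] at h'
  split_ifs at h' <;> linarith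

end Augmentation

end Flows

section EdmondsKarp

variable {V : Type*} [Fintype V] [DecidableEq V] {c f f' : V → V → ℝ} {s t : V}

theorem EKStep.residualAdj_or_of_residualAdj (h : EKStep c s t f f') {u v : V}
    (h' : ResidualAdj c f' u v) : ResidualAdj c f u v ∨ ResidualAdj c f v u := by
  obtain ⟨p, ε, hp, -, hε, -, -, rfl⟩ := h
  refine or_iff_not_imp_left.2 fun hn => ?_
  exact hp.2.2.2.2 _ (swap_mem_pathPairs_of_residualAdj_augmentFlow hε.le h' hn)

theorem EKStep.reachableWithin (h : EKStep c s t f f') {m : ℕ} {v : V}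
    (hv : ReachableWithin (ResidualAdj c f') m s v) :
    ReachableWithin (ResidualAdj c f) m s v := by
  obtain ⟨p, ε, hp, hmin, hε, -, -, rfl⟩ := h
  obtain ⟨l, hs, hv, hl, hlen⟩ := hv
  suffices key : ∀ k (hk : k < l.length), ReachableWithin (ResidualAdj c f) k s l[k] by
    rw [List.getLast?_eq_getElem?, List.getElem?_eq_some_iff] at hv
    obtain ⟨hlast, rfl⟩ := hv
    exact (key _ hlast).mono (by omega)
  intro k
  induction k with
  | zero =>
    intro hk
    rw [List.head?_eq_getElem?, List.getElem?_eq_some_iff] at hs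
    obtain ⟨_, rfl⟩ := hs
    exact .refl _
  | succ k ih =>
    intro hk
    have hk' := ih (by omega)
    by_cases hr : ResidualAdj c f l[k] l[k + 1]
    · exact hk'.trans (.single hr)
    -- `(l[k+1], l[k])` lies on the shortest path `p`, so `l[k+1]` is one step closer to `s`.
    obtain ⟨i, hi, he⟩ := mem_pathPairs_iff.1
      (swap_mem_pathPairs_of_residualAdj_augmentFlow hε.le (hl.getElem k hk) hr)
    simp only [Prod.mk.injEq] at he
    have hik : i + 1 ≤ k := by
      have := hk'.relDist_le
      rw [← he.2, hp.relDist_getElem hmin (i + 1) hi] at this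
      exact_mod_cast this
    rw [← he.1]
    exact (hp.isChain.reachableWithin_head_getElem hp.1 i (by omega)).mono (by omega)

theorem EKStep.relDist_le (h : EKStep c s t f f') (v : V) :
    relDist (ResidualAdj c f) s v ≤ relDist (ResidualAdj c f') s v :=
  le_iInf₂ fun _ hm => (h.reachableWithin hm).relDist_le

theorem EKStep.relDist_eq_add_one_of_residualAdj (h : EKStep c s t f f') {u v : V}
    (h' : ResidualAdj c f' u v) (hn : ¬ResidualAdj c f u v) :
    relDist (ResidualAdj c f) s u = relDist (ResidualAdj c f) s v + 1 := by
  obtain ⟨p, ε, hp, hmin, hε, -, -, rfl⟩ := h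
  obtain ⟨i, hi, he⟩ :=
    mem_pathPairs_iff.1 (swap_mem_pathPairs_of_residualAdj_augmentFlow hε.le h' hn)
  simp only [Prod.mk.injEq] at he
  rw [← he.1, ← he.2, hp.relDist_getElem hmin, hp.relDist_getElem hmin, Nat.cast_succ]

theorem EKStep.exists_saturated (h : EKStep c s t f f') :
    ∃ u v : V, ∃ i : ℕ, i + 2 ≤ Fintype.card V ∧ relDist (ResidualAdj c f) s u = i ∧
      relDist (ResidualAdj c f) s v = i + 1 ∧ ResidualAdj c f u v ∧ ¬ResidualAdj c f' u v := by
  obtain ⟨p, ε, hp, hmin, hε, -, ⟨e, he, hεe⟩, rfl⟩ := h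
  have hnd : p.Nodup := hp.2.2.2.1
  obtain ⟨i, hi, rfl⟩ := mem_pathPairs_iff.1 he
  refine ⟨p[i], p[i + 1], i, ?_, hp.relDist_getElem hmin i _, ?_, hp.2.2.2.2 _ he, ?_⟩
  · have := hnd.length_le_card
    omega
  · rw [hp.relDist_getElem hmin, Nat.cast_succ]
  · have hswap := swap_notMem_pathPairs_of_nodup hnd he
    simp only [ResidualAdj, resCap_augmentFlow, if_pos he, if_neg hswap] at hεe ⊢
    linarith

end EdmondsKarp


section Runs

variable {V : Type*} [Fintype V] [DecidableEq V] {c : V → V → ℝ} {s t : V} {K : ℕ}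
  {g : ℕ → V → V → ℝ}

theorem relDist_le_of_le (hstep : ∀ k < K, EKStep c s t (g k) (g (k + 1))) {a b : ℕ}
    (hab : a ≤ b) (hb : b ≤ K) (v : V) :
    relDist (ResidualAdj c (g a)) s v ≤ relDist (ResidualAdj c (g b)) s v := by
  induction b, hab using Nat.le_induction with
  | base => exact le_rfl
  | succ b _ ih => exact (ih (by omega)).trans ((hstep b (by omega)).relDist_le v)

theorem relDist_add_two_le_of_saturated (hstep : ∀ k < K, EKStep c s t (g k) (g (k + 1)))
    {k k' : ℕ} (hkk' : k < k') (hk' : k' ≤ K) {u v : V}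
    (hv : relDist (ResidualAdj c (g k)) s v = relDist (ResidualAdj c (g k)) s u + 1)
    (hsat : ¬ResidualAdj c (g (k + 1)) u v) (hres : ResidualAdj c (g k') u v) :
    relDist (ResidualAdj c (g k)) s u + 2 ≤ relDist (ResidualAdj c (g k')) s u := by
  obtain ⟨j, hkj, hjk', hj, hj'⟩ :=
    Nat.exists_not_and_succ_between (P := fun j => ResidualAdj c (g j) u v) hkk' hsat hres
  have hrev := (hstep j (by omega)).relDist_eq_add_one_of_residualAdj hj' hj
  calc relDist (ResidualAdj c (g k)) s u + 2
      = relDist (ResidualAdj c (g k)) s v + 1 := by rw [hv, add_assoc, one_add_one_eq_two]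
    _ ≤ relDist (ResidualAdj c (g j)) s v + 1 := by
      gcongr; exact relDist_le_of_le hstep (by omega) (by omega) v
    _ = relDist (ResidualAdj c (g j)) s u := hrev.symm
    _ ≤ relDist (ResidualAdj c (g k')) s u := relDist_le_of_le hstep (by omega) hk' u

theorem pos_or_pos_swap_of_residualAdj (hg0 : g 0 = fun _ _ => 0)
    (hstep : ∀ k < K, EKStep c s t (g k) (g (k + 1))) {k : ℕ} (hk : k ≤ K) {u v : V}
    (h : ResidualAdj c (g k) u v) : 0 < c u v ∨ 0 < c v u := by
  induction k generalizing u v with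
  | zero => exact .inl (by simpa [ResidualAdj, resCap, hg0] using h)
  | succ k ih =>
    rcases (hstep k (by omega)).residualAdj_or_of_residualAdj h with h | h
    · exact ih (by omega) h
    · exact (ih (by omega) h).symm

end Runs



theorem edmondsKarp_augmentation_bound_general
    {V : Type*} [Fintype V] [DecidableEq V]
    (c : V → V → ℝ) (s t : V)
    (K : ℕ) (g : ℕ → V → V → ℝ)
    (hg0 : g 0 = fun _ _ => 0)
    (hstep : ∀ k < K, EKStep c s t (g k) (g (k + 1))) :
    K ≤ Fintype.card V * Set.ncard {e : V × V | 0 < c e.1 e.2} := by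
  choose u v i hi hu hv hres hsat using fun k : Fin K => (hstep k k.isLt).exists_saturated
  have hgap : ∀ a b : Fin K, a < b → (u a, v a) = (u b, v b) → i a + 2 ≤ i b := by
    intro a b hab he
    simp only [Prod.mk.injEq] at he
    have := relDist_add_two_le_of_saturated hstep hab b.isLt.le (by rw [hv, hu]) (hsat a)
      (he.1 ▸ he.2 ▸ hres b)
    rw [hu, he.1, hu] at this
    exact_mod_cast this
  have hcount := card_le_card_mul_div_two_of_gap (E := {e | 0 < c e.1 e.2 ∨ 0 < c e.2 e.1})
    (fun k => (u k, v k)) i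
    (fun k => by simpa using pos_or_pos_swap_of_residualAdj hg0 hstep k.isLt.le (hres k)) hi hgap
  rw [Fintype.card_fin] at hcount
  rw [Set.ncard_eq_toFinset_card', Set.toFinset_ofPred]
  calc K ≤ 2 * #{e : V × V | 0 < c e.1 e.2} * (Fintype.card V / 2) :=
        hcount.trans (Nat.mul_le_mul_right _ (card_filter_or_swap_le _))
    _ ≤ Fintype.card V * #{e : V × V | 0 < c e.1 e.2} := by
      rw [mul_comm 2, mul_assoc, mul_comm]; gcongr; omega

/-- The Edmonds–Karp algorithm performs at most `n·m` augmentations on a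
network with `n` vertices and `m` edges. -/
theorem edmondsKarp_augmentation_bound
    {V : Type*} [Fintype V] [DecidableEq V]
    (c : V → V → ℝ) (hc : ∀ u v, 0 ≤ c u v) (s t : V) (hst : s ≠ t)
    (K : ℕ) (g : ℕ → V → V → ℝ)
    (hg0 : g 0 = fun _ _ => 0)
    (hstep : ∀ k < K, EKStep c s t (g k) (g (k + 1))) :
    K ≤ Fintype.card V * Set.ncard {e : V × V | 0 < c e.1 e.2} :=
  edmondsKarp_augmentation_bound_general c s t K g hg0 hstep
end
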